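/- arXiv:1410.3637 — 4 statements merged into one kernel-verified Lean document; each statement's English description precedes it below -/
import Mathlib

section
/- Every (d+1)-uniform hypergraph on n vertices with m edges (m ≥ n/(d+1)) contains an independent set of size at least (d/(d+1)^{(d+1)/d}) · n / (m/n)^{1/d}. -/
open Finset


lemma spencer_prod {V : Type*} [DecidableEq V] (p q : ℝ) (hpq : p + q = 1)
    (s : Finset V) :
    ∑ t ∈ s.powerset, p ^ t.card * q ^ (s \ t).card = 1 := by
  have h := Finset.prod_add (fun _ : V => p) (fun _ : V => q) s
  simp only [Finset.prod_const] at h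
  rw [← h, hpq, one_pow]

lemma spencer_key {V : Type*} [Fintype V] [DecidableEq V] (p q : ℝ) (hpq : p + q = 1)
    (A : Finset V) :
    ∑ S ∈ Finset.univ.powerset.filter (fun S => A ⊆ S),
      p ^ S.card * q ^ (Finset.univ \ S).card = p ^ A.card := by
  rw [← mul_one (p ^ A.card), ← spencer_prod p q hpq (Finset.univ \ A), Finset.mul_sum]
  refine Finset.sum_bij' (fun S _ => S \ A) (fun T _ => A ∪ T) ?_ ?_ ?_ ?_ ?_
  · intro S hS
    simp only [mem_filter, mem_powerset] at hS ⊢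
    exact sdiff_subset_sdiff (subset_univ S) le_rfl
  · intro T hT
    simp only [mem_powerset] at hT
    simp only [mem_filter, mem_powerset]
    exact ⟨subset_univ _, subset_union_left⟩
  · intro S hS
    simp only [mem_filter, mem_powerset] at hS
    exact union_sdiff_of_subset hS.2
  · intro T hT
    simp only [mem_powerset] at hT
    have hd : Disjoint A T := by
      refine disjoint_left.mpr fun a haA haT => ?_
      exact (mem_sdiff.mp (hT haT)).2 haA
    show (A ∪ T) \ A = T
    exact union_sdiff_cancel_left hd
  · intro S hS
    simp only [mem_filter, mem_powerset] at hS
    have hcs : (card A ≤ card S) := card_le_card hS.2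
    have hcard : S.card = A.card + (S \ A).card := by
      rw [card_sdiff_of_subset hS.2]; omega
    have hset : (Finset.univ \ A) \ (S \ A) = Finset.univ \ S := by
      ext a
      have haux : a ∈ A → a ∈ S := fun h => hS.2 h
      simp only [mem_sdiff, mem_univ, true_and]
      tauto
    rw [hset, hcard, pow_add, mul_assoc]

/-- There is a set `S` with `|S| - #{edges inside S}` at least the expectation `p·n - p^(d+1)·m`. -/
lemma spencer_exists {V : Type*} [Fintype V] [DecidableEq V] (d : ℕ)
    (E : Finset (Finset V)) (hunif : ∀ e ∈ E, e.card = d + 1)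
    (p : ℝ) (hp0 : 0 < p) (hp1 : p ≤ 1) :
    ∃ S : Finset V, p * (Fintype.card V) - p ^ (d+1) * E.card ≤
      (S.card : ℝ) - ((E.filter (fun e => e ⊆ S)).card : ℝ) := by
  classical
  set q : ℝ := 1 - p with hq
  have hpq : p + q = 1 := by rw [hq]; ring
  have hq0 : 0 ≤ q := by rw [hq]; linarith
  set w : Finset V → ℝ := fun S => p ^ S.card * q ^ (Finset.univ \ S).card with hw
  have hw0 : ∀ S, 0 ≤ w S := fun S => by positivity
  set P := (Finset.univ : Finset V).powerset with hP
  have sum1 : ∑ S ∈ P, w S = 1 := spencer_prod p q hpq _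
  have sumcard : ∑ S ∈ P, w S * (S.card : ℝ) = p * (Fintype.card V) := by
    have expand : ∀ S : Finset V, w S * (S.card : ℝ)
        = ∑ v ∈ Finset.univ, (if v ∈ S then w S else 0) := by
      intro S
      rw [Finset.sum_ite_mem, Finset.univ_inter, Finset.sum_const, nsmul_eq_mul, mul_comm]
    calc ∑ S ∈ P, w S * (S.card : ℝ)
        = ∑ S ∈ P, ∑ v ∈ Finset.univ, (if v ∈ S then w S else 0) :=
          Finset.sum_congr rfl fun S _ => expand S
      _ = ∑ v ∈ Finset.univ, ∑ S ∈ P, (if v ∈ S then w S else 0) := Finset.sum_comm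
      _ = ∑ v ∈ (Finset.univ : Finset V), p := by
          refine Finset.sum_congr rfl fun v _ => ?_
          rw [← Finset.sum_filter]
          have h := spencer_key p q hpq ({v} : Finset V)
          simp only [card_singleton, pow_one, Finset.singleton_subset_iff] at h
          exact h
      _ = p * (Fintype.card V) := by
          rw [Finset.sum_const, Finset.card_univ, nsmul_eq_mul, mul_comm]
  have sumedge : ∑ S ∈ P, w S * ((E.filter (fun e => e ⊆ S)).card : ℝ)
      = p ^ (d+1) * E.card := by
    have expand : ∀ S : Finset V, w S * ((E.filter (fun e => e ⊆ S)).card : ℝ)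
        = ∑ e ∈ E, (if e ⊆ S then w S else 0) := by
      intro S
      rw [← Finset.sum_filter, Finset.sum_const, nsmul_eq_mul, mul_comm]
    calc ∑ S ∈ P, w S * ((E.filter (fun e => e ⊆ S)).card : ℝ)
        = ∑ S ∈ P, ∑ e ∈ E, (if e ⊆ S then w S else 0) :=
          Finset.sum_congr rfl fun S _ => expand S
      _ = ∑ e ∈ E, ∑ S ∈ P, (if e ⊆ S then w S else 0) := Finset.sum_comm
      _ = ∑ e ∈ E, p ^ (d+1) := by
          refine Finset.sum_congr rfl fun e he => ?_
          rw [← Finset.sum_filter]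
          have h := spencer_key p q hpq e
          rw [hunif e he] at h
          exact h
      _ = p ^ (d+1) * E.card := by
          rw [Finset.sum_const, nsmul_eq_mul, mul_comm]
  set c : ℝ := p * (Fintype.card V) - p ^ (d+1) * E.card with hc
  by_contra hcon
  push_neg at hcon
  have hlt : ∀ S ∈ P, (S.card : ℝ) - ((E.filter (fun e => e ⊆ S)).card : ℝ) < c := by
    intro S _
    exact hcon S
  have hsum : ∑ S ∈ P, w S * ((S.card : ℝ) - ((E.filter (fun e => e ⊆ S)).card : ℝ))
      = c := by
    rw [hc, ← sumcard, ← sumedge, ← Finset.sum_sub_distrib]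
    exact Finset.sum_congr rfl fun S _ => by ring
  have hwU : 0 < w (Finset.univ : Finset V) := by
    rw [hw]
    simp only [Finset.sdiff_self, Finset.card_empty, pow_zero, mul_one]
    positivity
  have hU : (Finset.univ : Finset V) ∈ P := Finset.mem_powerset.mpr (subset_refl _)
  have hstrict : ∑ S ∈ P, w S * ((S.card : ℝ) - ((E.filter (fun e => e ⊆ S)).card : ℝ))
      < ∑ S ∈ P, w S * c := by
    refine Finset.sum_lt_sum (fun S hS => ?_) ⟨Finset.univ, hU, ?_⟩
    · exact mul_le_mul_of_nonneg_left (hlt S hS).le (hw0 S)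
    · exact mul_lt_mul_of_pos_left (hlt _ hU) hwU
  rw [hsum, ← Finset.sum_mul, sum1, one_mul] at hstrict
  exact lt_irrefl c hstrict


lemma spencer_delete {V : Type*} [DecidableEq V]
    (E : Finset (Finset V)) (hne : ∀ e ∈ E, e.Nonempty) (S : Finset V) :
    ∃ T : Finset V, (∀ e ∈ E, ¬ e ⊆ T) ∧
      (S.card : ℝ) - ((E.filter (fun e => e ⊆ S)).card : ℝ) ≤ (T.card : ℝ) := by
  classical
  set F := E.filter (fun e => e ⊆ S) with hF
  set B : Finset V := F.attach.image
    (fun e => (hne e.1 (Finset.mem_filter.mp e.2).1).choose) with hB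
  refine ⟨S \ B, ?_, ?_⟩
  · intro e he hsub
    have heS : e ⊆ S := hsub.trans (Finset.sdiff_subset)
    have heF : e ∈ F := Finset.mem_filter.mpr ⟨he, heS⟩
    set v := (hne e he).choose with hv
    have hvE : v ∈ e := (hne e he).choose_spec
    have hvB : v ∈ B := by
      rw [hB]
      exact Finset.mem_image.mpr ⟨⟨e, heF⟩, Finset.mem_attach _ _, rfl⟩
    have : v ∈ S \ B := hsub hvE
    exact (Finset.mem_sdiff.mp this).2 hvB
  · have h1 : S.card ≤ (S \ B).card + B.card := by
      have : S ⊆ (S \ B) ∪ B := fun a ha => by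
        by_cases hb : a ∈ B
        · exact Finset.mem_union_right _ hb
        · exact Finset.mem_union_left _ (Finset.mem_sdiff.mpr ⟨ha, hb⟩)
      calc S.card ≤ ((S \ B) ∪ B).card := Finset.card_le_card this
        _ ≤ (S \ B).card + B.card := Finset.card_union_le _ _
    have h2 : B.card ≤ F.card := by
      calc B.card ≤ F.attach.card := Finset.card_image_le
        _ = F.card := Finset.card_attach
    have h3 := h1.trans (Nat.add_le_add_left h2 _)
    have h4 : (S.card : ℝ) ≤ ((S \ B).card : ℝ) + (F.card : ℝ) := by exact_mod_cast h3
    linarith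



/-- Spencer's theorem for `(d+1)`-uniform hypergraphs: a `(d+1)`-uniform hypergraph on
`n` vertices with `m ≥ n/(d+1)` edges contains an independent set of size at least
`(d/(d+1)^((d+1)/d)) · n / (m/n)^(1/d)`. -/
theorem stmt3 (d : ℕ) (hd : 1 ≤ d) (V : Type*) [Fintype V]
    (E : Finset (Finset V)) (hunif : ∀ e ∈ E, e.card = d + 1)
    (hm : (Fintype.card V : ℝ) / (d + 1) ≤ E.card) :
    ∃ S : Finset V, (∀ e ∈ E, ¬ e ⊆ S) ∧
      ((d : ℝ) / ((d : ℝ) + 1) ^ (((d : ℝ) + 1) / d)) * (Fintype.card V) /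
          ((E.card : ℝ) / (Fintype.card V)) ^ (1 / (d : ℝ)) ≤ S.card := by
  classical
  by_cases hn0 : Fintype.card V = 0
  · refine ⟨∅, ?_, ?_⟩
    · intro e he hsub
      have h1 := hunif e he
      rw [Finset.subset_empty.mp hsub] at h1
      simp at h1
    · rw [hn0]
      simp
  · have hn : 0 < Fintype.card V := Nat.pos_of_ne_zero hn0
    have hD : (1:ℝ) ≤ (d:ℝ) := by exact_mod_cast hd
    have hD0 : (0:ℝ) < (d:ℝ) := by linarith
    have hN : (0:ℝ) < (Fintype.card V : ℝ) := by exact_mod_cast hn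
    have hM : (0:ℝ) < (E.card : ℝ) := lt_of_lt_of_le (by positivity) hm
    have hNle : (Fintype.card V : ℝ) ≤ ((d:ℝ)+1) * E.card := by
      rw [div_le_iff₀ (by positivity)] at hm
      linarith
    set p : ℝ := ((Fintype.card V : ℝ) / (((d:ℝ)+1) * E.card)) ^ (1/(d:ℝ)) with hp
    have hbase : (0:ℝ) < (Fintype.card V : ℝ) / (((d:ℝ)+1) * E.card) := by positivity
    have hbase1 : (Fintype.card V : ℝ) / (((d:ℝ)+1) * E.card) ≤ 1 :=
      (div_le_one (by positivity)).mpr hNle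
    have hp0 : 0 < p := Real.rpow_pos_of_pos hbase _
    have hp1 : p ≤ 1 := Real.rpow_le_one hbase.le hbase1 (by positivity)
    have hpd : p ^ d = (Fintype.card V : ℝ) / (((d:ℝ)+1) * E.card) := by
      rw [hp, ← Real.rpow_natCast (((Fintype.card V : ℝ) / (((d:ℝ)+1) * E.card)) ^ (1/(d:ℝ))) d,
        ← Real.rpow_mul hbase.le, one_div, inv_mul_cancel₀ (ne_of_gt hD0), Real.rpow_one]
    have hedge : p ^ (d+1) * E.card = p * (Fintype.card V) / ((d:ℝ)+1) := by
      rw [pow_succ, mul_comm (p^d) p, mul_assoc, hpd]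
      field_simp
    obtain ⟨S, hS⟩ := spencer_exists d E hunif p hp0 hp1
    have hne : ∀ e ∈ E, e.Nonempty := fun e he =>
      Finset.card_pos.mp (by rw [hunif e he]; omega)
    obtain ⟨T, hTind, hTcard⟩ := spencer_delete E hne S
    refine ⟨T, hTind, ?_⟩
    have hchain : p * (Fintype.card V) - p ^ (d+1) * E.card ≤ (T.card : ℝ) :=
      hS.trans hTcard
    rw [hedge] at hchain
    -- now show the stated bound equals p*N - p*N/(d+1) = d/(d+1) * p * N
    have ha : (0:ℝ) < ((Fintype.card V : ℝ)/(E.card : ℝ)) ^ ((1:ℝ)/(d:ℝ)) :=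
      Real.rpow_pos_of_pos (by positivity) _
    have hb : (0:ℝ) < ((d:ℝ)+1) ^ ((1:ℝ)/(d:ℝ)) := Real.rpow_pos_of_pos (by positivity) _
    have h1 : p = ((Fintype.card V : ℝ)/(E.card:ℝ)) ^ ((1:ℝ)/(d:ℝ))
        / (((d:ℝ)+1) ^ ((1:ℝ)/(d:ℝ))) := by
      have hb2 : (Fintype.card V : ℝ) / (((d:ℝ)+1) * E.card)
          = ((Fintype.card V : ℝ)/(E.card:ℝ)) / ((d:ℝ)+1) := by
        rw [div_div, mul_comm ((E.card:ℝ)) ((d:ℝ)+1)]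
      rw [hp, hb2, Real.div_rpow (by positivity) (by positivity)]
    have h2 : ((E.card:ℝ)/(Fintype.card V : ℝ)) ^ ((1:ℝ)/(d:ℝ))
        = (((Fintype.card V : ℝ)/(E.card:ℝ)) ^ ((1:ℝ)/(d:ℝ)))⁻¹ := by
      rw [← Real.inv_rpow (by positivity), inv_div]
    have h3 : ((d:ℝ)+1) ^ (((d:ℝ)+1)/(d:ℝ)) = ((d:ℝ)+1) * ((d:ℝ)+1) ^ ((1:ℝ)/(d:ℝ)) := by
      have hexp : ((d:ℝ)+1)/(d:ℝ) = 1 + 1/(d:ℝ) := by field_simp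
      rw [hexp, Real.rpow_add (by positivity), Real.rpow_one]
    have heq : ((d : ℝ) / ((d : ℝ) + 1) ^ (((d : ℝ) + 1) / (d:ℝ))) * (Fintype.card V) /
          ((E.card : ℝ) / (Fintype.card V)) ^ (1 / (d : ℝ))
        = p * (Fintype.card V) - p * (Fintype.card V) / ((d:ℝ)+1) := by
      rw [h2, h3, h1]
      field_simp
      ring
    rw [heq]
    exact hchain
end

section
/- Let P be a set of n points in the plane with at most ℓ points on any line, where ℓ ≤ C√n for a constant C. If for each k the number of lines containing at least k points of P is at most B(n²/k³ + n/k) (Szemerédi–Trotter), then the number of collinear triples of points of P is O(n² log ℓ). -/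
open scoped Classical

/-- `L` is a line in `ℝ²`: a nonempty affine subspace with one-dimensional direction. -/
def IsLine (L : AffineSubspace ℝ (Fin 2 → ℝ)) : Prop :=
  L ≠ ⊥ ∧ Module.finrank ℝ L.direction = 1

/-!
Sort the collinear triples by the line `L` through them: a line with `m` points carries
`C(m, 3) = ∑_{j < m} C(j, 2)` triples, so summing over lines and exchanging the sums gives
`∑_{j < ℓ} N_{j+1} C(j, 2)`, where `N_k` is the number of lines with at least `k` points.
The Szemerédi–Trotter bound `N_{j+1} ≤ B (n²/(j+1)³ + n/(j+1))` turns the `j`-th term into at most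
`B (n²/(j+1) + n (j+1))`, and summing gives `B (n² (1 + log ℓ) + n ℓ²)`. Finally `ℓ² ≤ C² n` and
`log ℓ ≥ 1` for `ℓ ≥ 3`.
-/

open Finset

theorem AffineSubspace.eq_affineSpan_pair_of_finrank_direction_eq_one {k V : Type*} [Field k]
    [AddCommGroup V] [Module k V] {L : AffineSubspace k V}
    (hL : Module.finrank k L.direction = 1) {p q : V} (hp : p ∈ L) (hq : q ∈ L) (hpq : p ≠ q) :
    L = line[k, p, q] := by
  have : FiniteDimensional k L.direction := Module.finite_of_finrank_pos (by omega)
  have hle : line[k, p, q] ≤ L := affineSpan_pair_le_of_mem_of_mem hp hq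
  refine (AffineSubspace.eq_of_direction_eq_of_nonempty_of_le ?_
    ⟨p, left_mem_affineSpan_pair k p q⟩ hle).symm
  refine Submodule.eq_of_le_of_finrank_le (AffineSubspace.direction_le hle) ?_
  rw [hL, direction_affineSpan, vectorSpan_pair, finrank_span_singleton (vsub_ne_zero.mpr hpq)]

def richLines (P : Finset (Fin 2 → ℝ)) (k : ℕ) : Set (AffineSubspace ℝ (Fin 2 → ℝ)) :=
  {L | IsLine L ∧ k ≤ (P.filter (· ∈ L)).card}

noncomputable def collinearTriples (P : Finset (Fin 2 → ℝ)) : Finset (Finset (Fin 2 → ℝ)) :=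
  (P.powersetCard 3).filter
    (fun T => ∃ L : AffineSubspace ℝ (Fin 2 → ℝ), IsLine L ∧ ∀ p ∈ T, p ∈ L)

theorem richLines_finite (P : Finset (Fin 2 → ℝ)) {k : ℕ} (hk : 2 ≤ k) :
    (richLines P k).Finite := by
  refine ((P.finite_toSet.prod P.finite_toSet).image
    fun pq => line[ℝ, pq.1, pq.2]).subset ?_
  rintro L ⟨hL, hcard⟩
  obtain ⟨p, hp, q, hq, hpq⟩ := Finset.one_lt_card.mp (by omega : 1 < (P.filter (· ∈ L)).card)
  rw [Finset.mem_filter] at hp hq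
  exact ⟨(p, q), ⟨hp.1, hq.1⟩,
    (AffineSubspace.eq_affineSpan_pair_of_finrank_direction_eq_one hL.2 hp.2 hq.2 hpq).symm⟩

theorem collinearTriples_subset_biUnion (P : Finset (Fin 2 → ℝ)) :
    collinearTriples P ⊆
      (richLines_finite P (by norm_num : 2 ≤ 3)).toFinset.biUnion
        fun L => (P.filter (· ∈ L)).powersetCard 3 := by
  intro T hT
  obtain ⟨hTP, L, hL, hTL⟩ := Finset.mem_filter.mp hT
  rw [Finset.mem_powersetCard] at hTP
  have hTPL : T ⊆ P.filter (· ∈ L) := fun p hp => Finset.mem_filter.mpr ⟨hTP.1 hp, hTL p hp⟩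
  refine Finset.mem_biUnion.mpr ⟨L, ?_, Finset.mem_powersetCard.mpr ⟨hTPL, hTP.2⟩⟩
  exact (Set.Finite.mem_toFinset _).mpr ⟨hL, hTP.2 ▸ Finset.card_le_card hTPL⟩

theorem sum_choose_three_eq_sum_range_card_filter {ι : Type*} (s : Finset ι) (f : ι → ℕ) {ℓ : ℕ}
    (hf : ∀ i ∈ s, f i ≤ ℓ) :
    ∑ i ∈ s, (f i).choose 3 = ∑ j ∈ range ℓ, (s.filter (j < f ·)).card * j.choose 2 := by
  have hockey (m : ℕ) : ∑ j ∈ range m, j.choose 2 = m.choose 3 := by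
    induction m with
    | zero => rfl
    | succ m ih => rw [sum_range_succ, ih, Nat.choose_succ_succ' m 2, add_comm]
  calc ∑ i ∈ s, (f i).choose 3
      = ∑ i ∈ s, ∑ j ∈ range ℓ, if j < f i then j.choose 2 else 0 := by
        refine sum_congr rfl fun i hi => ?_
        rw [← sum_filter, ← hockey]
        congr 1
        ext j
        simp only [mem_filter, mem_range]
        have := hf i hi
        omega
    _ = ∑ j ∈ range ℓ, (s.filter (j < f ·)).card * j.choose 2 := by
        rw [sum_comm]
        simp only [← sum_filter, sum_const, smul_eq_mul]

theorem card_collinearTriples_le (P : Finset (Fin 2 → ℝ)) {ℓ : ℕ}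
    (hmax : ∀ L, IsLine L → (P.filter (· ∈ L)).card ≤ ℓ) :
    (collinearTriples P).card ≤ ∑ j ∈ range ℓ, (richLines P (j + 1)).ncard * j.choose 2 := by
  set S := (richLines_finite P (by norm_num : 2 ≤ 3)).toFinset
  have hS : ∀ L ∈ S, IsLine L := fun L hL => ((Set.Finite.mem_toFinset _).mp hL).1
  calc (collinearTriples P).card
      ≤ ∑ L ∈ S, ((P.filter (· ∈ L)).powersetCard 3).card :=
        (card_le_card (collinearTriples_subset_biUnion P)).trans card_biUnion_le
    _ = ∑ j ∈ range ℓ, (S.filter fun L => j < (P.filter (· ∈ L)).card).card * j.choose 2 := by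
        simp only [card_powersetCard]
        exact sum_choose_three_eq_sum_range_card_filter S _ fun L hL => hmax L (hS L hL)
    _ ≤ ∑ j ∈ range ℓ, (richLines P (j + 1)).ncard * j.choose 2 := by
        refine sum_le_sum fun j _ => ?_
        rcases lt_or_ge j 2 with hj | hj
        · simp [Nat.choose_eq_zero_of_lt hj]
        gcongr
        rw [← Set.ncard_coe_finset]
        refine Set.ncard_le_ncard (fun L hL => ?_) (richLines_finite P (by omega))
        obtain ⟨hLS, hjL⟩ := Finset.mem_filter.mp hL
        exact ⟨hS L hLS, hjL⟩

theorem ncard_richLines_mul_choose_two_le (P : Finset (Fin 2 → ℝ)) {B : ℝ} (hB : 0 ≤ B)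
    (hST : ∀ k : ℕ, 2 ≤ k → ((richLines P k).ncard : ℝ)
      ≤ B * ((P.card : ℝ) ^ 2 / (k : ℝ) ^ 3 + (P.card : ℝ) / k)) (j : ℕ) :
    ((richLines P (j + 1)).ncard : ℝ) * j.choose 2
      ≤ B * ((P.card : ℝ) ^ 2 / (j + 1) + P.card * (j + 1)) := by
  obtain rfl | hj := j.eq_zero_or_pos
  · simp only [Nat.choose_zero_succ, Nat.cast_zero, mul_zero, zero_add, div_one, mul_one]
    positivity
  have hchoose : (j.choose 2 : ℝ) ≤ ((j : ℝ) + 1) ^ 2 := by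
    exact_mod_cast (Nat.choose_le_pow j 2).trans (Nat.pow_le_pow_left j.le_succ 2)
  have hrich := hST (j + 1) (by omega)
  push_cast at hrich
  calc ((richLines P (j + 1)).ncard : ℝ) * j.choose 2
      ≤ B * ((P.card : ℝ) ^ 2 / ((j : ℝ) + 1) ^ 3 + P.card / ((j : ℝ) + 1)) * ((j : ℝ) + 1) ^ 2 :=
        mul_le_mul hrich hchoose (by positivity) (by positivity)
    _ = B * ((P.card : ℝ) ^ 2 / (j + 1) + P.card * (j + 1)) := by
        field_simp

theorem sum_range_inv_succ_le_one_add_log (ℓ : ℕ) :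
    ∑ j ∈ range ℓ, ((j : ℝ) + 1)⁻¹ ≤ 1 + Real.log ℓ := by
  simpa [harmonic] using harmonic_le_one_add_log ℓ

theorem sum_range_succ_le_sq (ℓ : ℕ) : ∑ j ∈ range ℓ, ((j : ℝ) + 1) ≤ (ℓ : ℝ) ^ 2 := by
  calc ∑ j ∈ range ℓ, ((j : ℝ) + 1) ≤ (range ℓ).card • (ℓ : ℝ) :=
        sum_le_card_nsmul _ _ _ fun j hj => by exact_mod_cast mem_range.mp hj
    _ = (ℓ : ℝ) ^ 2 := by rw [card_range, nsmul_eq_mul, sq]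

theorem one_le_log_of_three_le {ℓ : ℕ} (hℓ : 3 ≤ ℓ) : 1 ≤ Real.log ℓ := by
  rw [Real.le_log_iff_exp_le (by positivity)]
  calc Real.exp 1 ≤ 3 := (Real.exp_one_lt_d9.trans (by norm_num)).le
    _ ≤ ℓ := by exact_mod_cast hℓ

theorem stmt5_general (B C : ℝ) (hB : 0 < B) :
    ∃ K : ℝ, 0 < K ∧ ∀ (P : Finset (Fin 2 → ℝ)) (ℓ : ℕ), 3 ≤ ℓ →
      (ℓ : ℝ) ≤ C * Real.sqrt P.card →
      (∀ L : AffineSubspace ℝ (Fin 2 → ℝ), IsLine L → (P.filter (· ∈ L)).card ≤ ℓ) →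
      (∀ k : ℕ, 2 ≤ k →
        ({L : AffineSubspace ℝ (Fin 2 → ℝ) |
            IsLine L ∧ k ≤ (P.filter (· ∈ L)).card}.ncard : ℝ)
          ≤ B * ((P.card : ℝ) ^ 2 / (k : ℝ) ^ 3 + (P.card : ℝ) / k)) →
      (((P.powersetCard 3).filter
          (fun T => ∃ L : AffineSubspace ℝ (Fin 2 → ℝ), IsLine L ∧ ∀ p ∈ T, p ∈ L)).card : ℝ)
        ≤ K * (P.card : ℝ) ^ 2 * Real.log ℓ := by
  refine ⟨B * (2 + C ^ 2), by positivity, fun P ℓ hℓ hℓn hmax hST => ?_⟩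
  set n : ℝ := (P.card : ℝ)
  have hlog := one_le_log_of_three_le hℓ
  have hℓsq : (ℓ : ℝ) ^ 2 ≤ C ^ 2 * n := by
    calc (ℓ : ℝ) ^ 2 ≤ (C * Real.sqrt n) ^ 2 := by gcongr
      _ = C ^ 2 * n := by rw [mul_pow, Real.sq_sqrt (by positivity)]
  calc ((collinearTriples P).card : ℝ)
      ≤ ∑ j ∈ range ℓ, ((richLines P (j + 1)).ncard : ℝ) * j.choose 2 := by
        exact_mod_cast card_collinearTriples_le P hmax
    _ ≤ ∑ j ∈ range ℓ, B * (n ^ 2 / (j + 1) + n * (j + 1)) :=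
        sum_le_sum fun j _ => ncard_richLines_mul_choose_two_le P hB.le hST j
    _ = B * (n ^ 2 * ∑ j ∈ range ℓ, ((j : ℝ) + 1)⁻¹ + n * ∑ j ∈ range ℓ, ((j : ℝ) + 1)) := by
        simp only [div_eq_mul_inv, mul_sum, ← sum_add_distrib]
    _ ≤ B * (n ^ 2 * (1 + Real.log ℓ) + n * ℓ ^ 2) := by
        gcongr
        · exact sum_range_inv_succ_le_one_add_log ℓ
        · exact sum_range_succ_le_sq ℓ
    _ ≤ B * (2 + C ^ 2) * n ^ 2 * Real.log ℓ := by
        have hn : 0 ≤ n := by positivity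
        nlinarith [mul_le_mul_of_nonneg_left hℓsq hn, mul_nonneg hB.le (sq_nonneg n),
          mul_nonneg (mul_nonneg hB.le (sq_nonneg n)) (sq_nonneg C)]

/-- Szemerédi–Trotter implies the collinear-triple bound: if `P` has `n` points, at most
`ℓ ≤ C√n` on any line, and for each `k ≥ 2` the number of lines with at least `k` points
is at most `B(n²/k³ + n/k)`, then the number of collinear triples is `O(n² log ℓ)`. -/
theorem stmt5 (B C : ℝ) (hB : 0 < B) (hC : 0 < C) :
    ∃ K : ℝ, 0 < K ∧ ∀ (P : Finset (Fin 2 → ℝ)) (ℓ : ℕ), 3 ≤ ℓ →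
      (ℓ : ℝ) ≤ C * Real.sqrt P.card →
      (∀ L : AffineSubspace ℝ (Fin 2 → ℝ), IsLine L → (P.filter (· ∈ L)).card ≤ ℓ) →
      (∀ k : ℕ, 2 ≤ k →
        ({L : AffineSubspace ℝ (Fin 2 → ℝ) |
            IsLine L ∧ k ≤ (P.filter (· ∈ L)).card}.ncard : ℝ)
          ≤ B * ((P.card : ℝ) ^ 2 / (k : ℝ) ^ 3 + (P.card : ℝ) / k)) →
      (((P.powersetCard 3).filter
          (fun T => ∃ L : AffineSubspace ℝ (Fin 2 → ℝ), IsLine L ∧ ∀ p ∈ T, p ∈ L)).card : ℝ)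
        ≤ K * (P.card : ℝ) ^ 2 * Real.log ℓ :=
  stmt5_general B C hB
end

section
/- Let d ≥ 3, ℓ ≥ d+1, n with ℓ² ≤ n, and suppose (h_k)_{k=d+1}^{ℓ} are nonnegative reals such that Σ_{i=k}^{ℓ} h_i ≤ n^d/k^{d+1} + n^{d-1}/k^{d-1} for all k. Then Σ_{k=d+1}^{ℓ} h_k·k^{d+1} ≤ C_d·n^d·log ℓ for a constant C_d depending only on d. -/
/-!
With the tail sums `T_k = ∑_(i ≥ k) h_i`, summation by parts rewrites `∑ h_k k^(d+1)` as
`(d+1)^(d+1) T_(d+1) + ∑_(k > d+1) (k^(d+1) - (k-1)^(d+1)) T_k`. Since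
`k^(d+1) - (k-1)^(d+1) ≤ (d+1) k^d`, the bound on `T_k` makes the `k`-th term at most
`(d+1) (n^d / k + k n^(d-1))`. The first part sums to at most `(d+1) n^d log ℓ`, the second to at
most `(d+1) ℓ² n^(d-1) ≤ (d+1) n^d` because `ℓ² ≤ n`, and the head term is at most `2 n^d`; all of
these are `O(n^d log ℓ)` as `log ℓ ≥ 1`.
-/

open Finset

theorem Finset.sum_Ioc_sub_pred {G : Type*} [AddCommGroup G] (f : ℕ → G) {a b : ℕ}
    (hab : a ≤ b) : ∑ k ∈ Ioc a b, (f k - f (k - 1)) = f b - f a := by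
  induction b, hab using Nat.le_induction with
  | base => simp
  | succ b hab ih => rw [sum_Ioc_succ_top hab, ih, Nat.add_sub_cancel]; abel

theorem Finset.sum_Icc_mul_eq_add_sum_Ioc_mul_tail {R : Type*} [CommRing R] (h f : ℕ → R)
    {a b : ℕ} (hab : a ≤ b) :
    ∑ k ∈ Icc a b, h k * f k =
      f a * ∑ k ∈ Icc a b, h k + ∑ k ∈ Ioc a b, (f k - f (k - 1)) * ∑ i ∈ Icc k b, h i := by
  induction b, hab using Nat.le_induction with
  | base => simp [mul_comm]
  | succ b hab ih =>
    have htail : ∀ k ∈ Ioc a b, (f k - f (k - 1)) * ∑ i ∈ Icc k (b + 1), h i =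
        (f k - f (k - 1)) * ∑ i ∈ Icc k b, h i + (f k - f (k - 1)) * h (b + 1) := by
      intro k hk
      rw [sum_Icc_succ_top (by grind), mul_add]
    have hf := sum_Ioc_sub_pred f (hab.trans b.le_succ)
    rw [sum_Ioc_succ_top hab, Nat.add_sub_cancel] at hf
    rw [sum_Icc_succ_top (by omega), sum_Icc_succ_top (by omega), sum_Ioc_succ_top hab, ih,
      sum_congr rfl htail, sum_add_distrib, ← sum_mul, Icc_self, sum_singleton, Nat.add_sub_cancel]
    linear_combination (-h (b + 1)) * hf

theorem Finset.sum_Icc_mul_le_of_tail_le {R : Type*} [CommRing R] [PartialOrder R]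
    [IsOrderedRing R] {h f B : ℕ → R} {a b : ℕ} (hab : a ≤ b) (hf : Monotone f)
    (hfa : 0 ≤ f a) (hB : ∀ k ∈ Icc a b, ∑ i ∈ Icc k b, h i ≤ B k) :
    ∑ k ∈ Icc a b, h k * f k ≤ f a * B a + ∑ k ∈ Ioc a b, (f k - f (k - 1)) * B k := by
  rw [sum_Icc_mul_eq_add_sum_Ioc_mul_tail h f hab]
  gcongr with k hk
  · exact hB a (left_mem_Icc.2 hab)
  · exact sub_nonneg.2 (hf (Nat.sub_le k 1))
  · exact hB k (Ioc_subset_Icc_self hk)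

theorem cast_pow_succ_sub_cast_pred_pow_succ_le {R : Type*} [CommRing R] [LinearOrder R]
    [IsStrictOrderedRing R] (k m : ℕ) :
    (k : R) ^ (m + 1) - ((k - 1 : ℕ) : R) ^ (m + 1) ≤ (m + 1) * (k : R) ^ m := by
  cases k with
  | zero => simpa using (by positivity : (0 : R) ≤ (m + 1) * 0 ^ m)
  | succ k =>
    have hk : (0 : R) ≤ k := k.cast_nonneg
    have := (le_abs_self _).trans (abs_pow_sub_pow_le ((k : R) + 1) k (m + 1))
    rw [add_sub_cancel_left, abs_one, one_mul, Nat.add_sub_cancel, Nat.cast_succ,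
      abs_of_nonneg hk, abs_of_nonneg (by positivity), max_eq_left (by linarith)] at this
    simpa only [Nat.add_sub_cancel, Nat.cast_succ] using this

theorem Real.inv_le_log_sub_log_sub_one {x : ℝ} (hx : 1 < x) :
    x⁻¹ ≤ Real.log x - Real.log (x - 1) := by
  have hx1 : 0 < x - 1 := sub_pos.2 hx
  calc x⁻¹ = 1 - (x / (x - 1))⁻¹ := by field_simp; ring
    _ ≤ Real.log (x / (x - 1)) := Real.one_sub_inv_le_log_of_pos (by positivity)
    _ = Real.log x - Real.log (x - 1) := Real.log_div (by positivity) hx1.ne'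

theorem sum_Ioc_inv_le_log_sub_log {a b : ℕ} (ha : 0 < a) (hab : a ≤ b) :
    ∑ k ∈ Ioc a b, (k : ℝ)⁻¹ ≤ Real.log b - Real.log a := by
  rw [← sum_Ioc_sub_pred (fun k : ℕ ↦ Real.log k) hab]
  gcongr with k hk
  have hk : 1 < k := by grind
  rw [Nat.cast_pred (by omega)]
  exact Real.inv_le_log_sub_log_sub_one (by exact_mod_cast hk)

noncomputable def tailBound (d : ℕ) (n k : ℝ) : ℝ :=
  n ^ d / k ^ (d + 1) + n ^ (d - 1) / k ^ (d - 1)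

section tailBound

variable {d : ℕ} {n k : ℝ}

theorem pow_succ_mul_tailBound (hd : d ≠ 0) (hk : k ≠ 0) :
    k ^ (d + 1) * tailBound d n k = n ^ d + k ^ 2 * n ^ (d - 1) := by
  obtain ⟨d, rfl⟩ := Nat.exists_eq_add_one_of_ne_zero hd
  simp only [tailBound, Nat.add_sub_cancel]
  field_simp
  ring

theorem pow_mul_tailBound (hd : d ≠ 0) (hk : k ≠ 0) :
    k ^ d * tailBound d n k = n ^ d * k⁻¹ + n ^ (d - 1) * k := by
  obtain ⟨d, rfl⟩ := Nat.exists_eq_add_one_of_ne_zero hd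
  simp only [tailBound, Nat.add_sub_cancel]
  field_simp
  ring

theorem tailBound_nonneg (hn : 0 ≤ n) (hk : 0 ≤ k) : 0 ≤ tailBound d n k := by
  unfold tailBound
  positivity

theorem pow_succ_mul_tailBound_le (hd : d ≠ 0) (hk : 0 < k) (hkn : k ^ 2 ≤ n) :
    k ^ (d + 1) * tailBound d n k ≤ 2 * n ^ d := by
  have hn : 0 ≤ n := (sq_nonneg k).trans hkn
  calc k ^ (d + 1) * tailBound d n k = n ^ d + k ^ 2 * n ^ (d - 1) :=
        pow_succ_mul_tailBound hd hk.ne'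
    _ ≤ n ^ d + n * n ^ (d - 1) := by gcongr
    _ = 2 * n ^ d := by rw [← pow_succ', Nat.sub_add_cancel (Nat.one_le_iff_ne_zero.2 hd)]; ring

theorem sum_Ioc_pow_succ_sub_mul_tailBound_le (hd : d ≠ 0) {a b : ℕ} (ha : 0 < a) (hab : a ≤ b)
    (hbn : (b : ℝ) ^ 2 ≤ n) :
    ∑ k ∈ Ioc a b, ((k : ℝ) ^ (d + 1) - ((k - 1 : ℕ) : ℝ) ^ (d + 1)) * tailBound d n k ≤
      (d + 1) * n ^ d * (Real.log b - Real.log a + 1) := by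
  have hn : 0 ≤ n := (sq_nonneg _).trans hbn
  have hsum : ∑ k ∈ Ioc a b, (k : ℝ) ≤ n := by
    calc ∑ k ∈ Ioc a b, (k : ℝ) ≤ #(Ioc a b) • (b : ℝ) :=
          sum_le_card_nsmul _ _ _ fun k hk ↦ by exact_mod_cast (mem_Ioc.1 hk).2
      _ ≤ (b : ℝ) ^ 2 := by
          rw [nsmul_eq_mul, Nat.card_Ioc, sq]
          gcongr
          exact_mod_cast Nat.sub_le b a
      _ ≤ n := hbn
  calc ∑ k ∈ Ioc a b, ((k : ℝ) ^ (d + 1) - ((k - 1 : ℕ) : ℝ) ^ (d + 1)) * tailBound d n k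
      ≤ ∑ k ∈ Ioc a b, (d + 1) * (k : ℝ) ^ d * tailBound d n k := by
        gcongr with k
        · exact tailBound_nonneg hn k.cast_nonneg
        · exact cast_pow_succ_sub_cast_pred_pow_succ_le k d
    _ = (d + 1) * (n ^ d * ∑ k ∈ Ioc a b, (k : ℝ)⁻¹ + n ^ (d - 1) * ∑ k ∈ Ioc a b, (k : ℝ)) := by
        simp only [mul_sum, ← sum_add_distrib]
        refine sum_congr rfl fun k hk ↦ ?_
        rw [mul_assoc, pow_mul_tailBound hd (Nat.cast_pos.2 (ha.trans (mem_Ioc.1 hk).1)).ne']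
    _ ≤ (d + 1) * (n ^ d * (Real.log b - Real.log a) + n ^ (d - 1) * n) := by
        gcongr
        exact sum_Ioc_inv_le_log_sub_log ha hab
    _ = (d + 1) * n ^ d * (Real.log b - Real.log a + 1) := by
        rw [← pow_succ, Nat.sub_add_cancel (Nat.one_le_iff_ne_zero.2 hd)]
        ring

end tailBound

/-- Arithmetic core of the Type-2 count: for `d ≥ 3`, if `ℓ ≥ d+1`, `ℓ² ≤ n`, and
nonnegative reals `(h_k)` satisfy `Σ_{i=k}^{ℓ} h_i ≤ n^d/k^(d+1) + n^(d-1)/k^(d-1)` for all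
`d+1 ≤ k ≤ ℓ`, then `Σ_{k=d+1}^{ℓ} h_k k^(d+1) ≤ C_d n^d log ℓ` for a constant `C_d`
depending only on `d`. -/
theorem stmt7 (d : ℕ) (hd : 3 ≤ d) :
    ∃ C : ℝ, 0 < C ∧ ∀ (ℓ n : ℕ) (h : ℕ → ℝ),
      d + 1 ≤ ℓ → ℓ ^ 2 ≤ n → (∀ k, 0 ≤ h k) →
      (∀ k, d + 1 ≤ k → k ≤ ℓ →
        ∑ i ∈ Finset.Icc k ℓ, h i ≤
          (n : ℝ) ^ d / (k : ℝ) ^ (d + 1) + (n : ℝ) ^ (d - 1) / (k : ℝ) ^ (d - 1)) →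
      ∑ k ∈ Finset.Icc (d + 1) ℓ, h k * (k : ℝ) ^ (d + 1) ≤
        C * (n : ℝ) ^ d * Real.log ℓ := by
  refine ⟨2 * d + 4, by positivity, fun ℓ n h hℓ hn _ hT ↦ ?_⟩
  have hd0 : d ≠ 0 := by omega
  have hℓn : (ℓ : ℝ) ^ 2 ≤ n := by exact_mod_cast hn
  have hlogℓ : 1 ≤ Real.log ℓ := by
    rw [Real.le_log_iff_exp_le (Nat.cast_pos.2 (by omega))]
    exact Real.exp_one_lt_three.le.trans (by exact_mod_cast (by omega : 3 ≤ ℓ))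
  have hlogd : 0 ≤ Real.log ((d + 1 : ℕ) : ℝ) := Real.log_nonneg (Nat.one_le_cast.2 d.succ_pos)
  have hhead := pow_succ_mul_tailBound_le (d := d) (n := n) hd0
    (k := ((d + 1 : ℕ) : ℝ)) (Nat.cast_pos.2 d.succ_pos)
    ((pow_le_pow_left₀ (Nat.cast_nonneg _) (Nat.cast_le.2 hℓ) 2).trans hℓn)
  have htail := sum_Ioc_pow_succ_sub_mul_tailBound_le hd0 d.succ_pos hℓ hℓn
  have hN : (0 : ℝ) ≤ n ^ d := by positivity
  calc ∑ k ∈ Icc (d + 1) ℓ, h k * (k : ℝ) ^ (d + 1)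
      ≤ ((d + 1 : ℕ) : ℝ) ^ (d + 1) * tailBound d n (d + 1 : ℕ) +
          ∑ k ∈ Ioc (d + 1) ℓ, ((k : ℝ) ^ (d + 1) - ((k - 1 : ℕ) : ℝ) ^ (d + 1)) *
            tailBound d n k :=
        sum_Icc_mul_le_of_tail_le (f := fun k : ℕ ↦ (k : ℝ) ^ (d + 1)) hℓ
          (fun i j hij ↦ pow_le_pow_left₀ i.cast_nonneg (Nat.cast_le.2 hij) _) (by positivity)
          fun k hk ↦ hT k (mem_Icc.1 hk).1 (mem_Icc.1 hk).2
    _ ≤ 2 * n ^ d + (d + 1) * n ^ d * (Real.log ℓ - Real.log ((d + 1 : ℕ) : ℝ) + 1) :=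
        add_le_add hhead htail
    _ ≤ (2 * d + 4) * n ^ d * Real.log ℓ := by
        nlinarith [mul_nonneg hN (sub_nonneg.2 hlogℓ), mul_nonneg hN hlogd]
end

section
/- Consider the 2^m points of the hypercube {1,2}^m ⊂ ℝ^m and a linear projection π: ℝ^m → ℝ^3 that is generic, i.e., any 4 points of {1,2}^m have coplanar images under π if and only if the 4 original points lie in a common 2-dimensional affine subspace of ℝ^m. Then the image point set π({1,2}^m) ⊂ ℝ^3 has no 5 points on a common plane. -/
open Module Submodule

/-- No point of the cube lies on the line through two other distinct cube points. -/
lemma cube_noline {m : ℕ} {a b c : Fin m → ℝ}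
    (ha : ∀ i, a i = 1 ∨ a i = 2) (hb : ∀ i, b i = 1 ∨ b i = 2)
    (hc : ∀ i, c i = 1 ∨ c i = 2)
    (hab : a ≠ b) (hca : c ≠ a) (hcb : c ≠ b) (t : ℝ) :
    c ≠ a + t • (b - a) := by
  intro h
  obtain ⟨i0, hi0⟩ : ∃ i, a i ≠ b i := by
    by_contra h'; push_neg at h'; exact hab (funext h')
  have hci0 : c i0 = a i0 + t * (b i0 - a i0) := by
    rw [h]; simp
  have ht : t = 0 ∨ t = 1 := by
    rcases ha i0 with h1 | h1 <;> rcases hb i0 with h2 | h2 <;> rcases hc i0 with h3 | h3 <;>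
      rw [h1, h2] at hi0 hci0 <;> rw [h3] at hci0 <;>
      first
        | exact absurd rfl hi0
        | (left; linarith)
        | (right; linarith)
  rcases ht with ht | ht
  · exact hca (by rw [h, ht]; funext i; simp)
  · exact hcb (by rw [h, ht]; funext i; simp)

lemma four_not_coplanar {m : ℕ} {a b c d : Fin m → ℝ}
    (ha : ∀ i, a i = 1 ∨ a i = 2) (hb : ∀ i, b i = 1 ∨ b i = 2)
    (hc : ∀ i, c i = 1 ∨ c i = 2)
    (hab : a ≠ b) (hca : c ≠ a) (hcb : c ≠ b) (i : Fin m)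
    (hiab : a i = b i) (hiac : a i = c i) (hiad : a i ≠ d i) :
    ¬ Coplanar ℝ ({a, b, c, d} : Set (Fin m → ℝ)) := by
  intro hcop
  set V : Submodule ℝ (Fin m → ℝ) := vectorSpan ℝ ({a, b, c, d} : Set (Fin m → ℝ)) with hV
  have hmem : ∀ x ∈ ({a, b, c, d} : Set (Fin m → ℝ)), x - a ∈ V := by
    intro x hx
    simpa using vsub_mem_vectorSpan ℝ hx (show a ∈ ({a,b,c,d} : Set (Fin m → ℝ)) by simp)
  have hba : b - a ∈ V := hmem b (by simp)
  have hcma : c - a ∈ V := hmem c (by simp)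
  have hda : d - a ∈ V := hmem d (by simp)
  have hli : LinearIndependent ℝ ![b - a, c - a] := by
    rw [LinearIndependent.pair_iff]
    intro α β hz
    by_cases hβ : β = 0
    · subst hβ
      simp only [zero_smul, add_zero] at hz
      have hba0 : b - a ≠ 0 := sub_ne_zero.mpr (Ne.symm hab)
      rcases smul_eq_zero.mp hz with h | h
      · exact ⟨h, rfl⟩
      · exact absurd h hba0
    · exfalso
      apply cube_noline ha hb hc hab hca hcb (-α / β)
      have hz' : β • (c - a) = (-α) • (b - a) := by
        rw [neg_smul]
        exact eq_neg_of_add_eq_zero_right hz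
      have : c - a = (-α / β) • (b - a) := by
        calc c - a = β⁻¹ • (β • (c - a)) := by
              rw [smul_smul, inv_mul_cancel₀ hβ, one_smul]
          _ = β⁻¹ • ((-α) • (b - a)) := by rw [hz']
          _ = (-α / β) • (b - a) := by rw [smul_smul]; congr 1; field_simp
      rw [← this]; abel
  have hle : span ℝ ({b - a, c - a} : Set (Fin m → ℝ)) ≤ V := by
    rw [span_le]
    rintro x hx
    simp only [Set.mem_insert_iff, Set.mem_singleton_iff] at hx
    rcases hx with rfl | rfl <;> assumption
  have hfr2 : finrank ℝ (span ℝ ({b - a, c - a} : Set (Fin m → ℝ))) = 2 := by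
    have h2 := finrank_span_eq_card hli
    have hr : Set.range ![b - a, c - a] = ({b - a, c - a} : Set (Fin m → ℝ)) := by
      ext x
      simp only [Set.mem_range, Fin.exists_fin_two, Set.mem_insert_iff, Set.mem_singleton_iff,
        Matrix.cons_val_zero, Matrix.cons_val_one, Matrix.head_cons, eq_comm]
    rw [hr] at h2
    simpa using h2
  have hVfr : finrank ℝ V ≤ 2 := finrank_le_of_rank_le hcop
  have heq : span ℝ ({b - a, c - a} : Set (Fin m → ℝ)) = V :=
    Submodule.eq_of_le_of_finrank_le hle (by rw [hfr2]; exact hVfr)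
  have hd' : d - a ∈ span ℝ ({b - a, c - a} : Set (Fin m → ℝ)) := heq ▸ hda
  rw [Submodule.mem_span_pair] at hd'
  obtain ⟨α, β, hαβ⟩ := hd'
  have := congrFun hαβ i
  simp only [Pi.add_apply, Pi.smul_apply, Pi.sub_apply, smul_eq_mul] at this
  apply hiad
  rw [← hiab, ← hiac] at this
  linarith

/-- If `π : ℝ^m → ℝ³` is a generic linear projection of the hypercube `{1,2}^m`, i.e.,
any 4 distinct points of the cube have coplanar images iff the original points are
coplanar (lie in a common 2-dimensional affine subspace), then the image point set has no
5 points on a common plane. -/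
theorem stmt15 (m : ℕ) (π : (Fin m → ℝ) →ₗ[ℝ] (Fin 3 → ℝ))
    (cube : Set (Fin m → ℝ)) (hcube : cube = {x | ∀ i, x i = 1 ∨ x i = 2})
    (hgen : ∀ s : Fin 4 → (Fin m → ℝ), (∀ j, s j ∈ cube) → Function.Injective s →
      (Coplanar ℝ (Set.range (fun j => π (s j))) ↔ Coplanar ℝ (Set.range s))) :
    ¬ ∃ t : Fin 5 → (Fin 3 → ℝ), (∀ j, t j ∈ π '' cube) ∧ Function.Injective t ∧
      Coplanar ℝ (Set.range t) := by
  classical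
  rintro ⟨t, htmem, htinj, htcop⟩
  have hcube' : ∀ x ∈ cube, ∀ i, x i = 1 ∨ x i = 2 := by
    rw [hcube]; intro x hx; exact hx
  choose s hscube hπs using fun j => htmem j
  have hsinj : Function.Injective s := fun j k h =>
    htinj (by rw [← hπs j, ← hπs k, h])
  -- find a coordinate where not all points agree
  obtain ⟨i, j0, k0, hik⟩ : ∃ i j k, s j i ≠ s k i := by
    by_contra h'
    push_neg at h'
    have h01 : s 0 = s 1 := funext fun i => h' i 0 1
    exact absurd (hsinj h01) (by decide)
  set A : Finset (Fin 5) := Finset.univ.filter (fun j => s j i = 1) with hA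
  set B : Finset (Fin 5) := Finset.univ.filter (fun j => s j i = 2) with hB
  have hval : ∀ j : Fin 5, s j i = 1 ∨ s j i = 2 := fun j => hcube' _ (hscube j) i
  have hmemA : ∀ j : Fin 5, j ∈ A ↔ s j i = 1 := by intro j; simp [hA]
  have hmemB : ∀ j : Fin 5, j ∈ B ↔ s j i = 2 := by intro j; simp [hB]
  have hdisj : Disjoint A B := by
    rw [Finset.disjoint_left]
    intro j hjA hjB
    rw [hmemA] at hjA; rw [hmemB] at hjB
    norm_num [hjA] at hjB
  have hunion : A ∪ B = Finset.univ := by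
    ext j
    simp only [Finset.mem_union, Finset.mem_univ, iff_true, hmemA, hmemB]
    exact hval j
  have hcard : A.card + B.card = 5 := by
    rw [← Finset.card_union_of_disjoint hdisj, hunion]
    simp
  have hAne : A.Nonempty ∨ B.card = 5 := by
    rcases Finset.eq_empty_or_nonempty A with h | h
    · right; rw [h] at hcard; simpa using hcard
    · left; exact h
  -- extract three indices with equal i-th coordinate and one with different
  obtain ⟨p, q, r, w, hpq, hpr, hqr, heq1, heq2, hne3⟩ :
      ∃ p q r w : Fin 5, p ≠ q ∧ p ≠ r ∧ q ≠ r ∧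
        s p i = s q i ∧ s p i = s r i ∧ s p i ≠ s w i := by
    rcases lt_or_ge 2 A.card with hbig | hsmall
    · obtain ⟨p, q, r, hp, hq, hr, hpq, hpr, hqr⟩ := Finset.two_lt_card_iff.mp hbig
      have hBne : B.Nonempty := by
        rcases hval j0 with h0 | h0
        · rcases hval k0 with h1 | h1
          · exact absurd (by rw [h0, h1]) hik
          · exact ⟨k0, (hmemB k0).mpr h1⟩
        · exact ⟨j0, (hmemB j0).mpr h0⟩
      obtain ⟨w, hw⟩ := hBne
      rw [hmemA] at hp hq hr; rw [hmemB] at hw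
      exact ⟨p, q, r, w, hpq, hpr, hqr, by rw [hp, hq], by rw [hp, hr],
        by rw [hp, hw]; norm_num⟩
    · have hbig : 2 < B.card := by omega
      obtain ⟨p, q, r, hp, hq, hr, hpq, hpr, hqr⟩ := Finset.two_lt_card_iff.mp hbig
      have hAne' : A.Nonempty := by
        rcases hval j0 with h0 | h0
        · exact ⟨j0, (hmemA j0).mpr h0⟩
        · rcases hval k0 with h1 | h1
          · exact ⟨k0, (hmemA k0).mpr h1⟩
          · exact absurd (by rw [h0, h1]) hik
      obtain ⟨w, hw⟩ := hAne'
      rw [hmemB] at hp hq hr; rw [hmemA] at hw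
      exact ⟨p, q, r, w, hpq, hpr, hqr, by rw [hp, hq], by rw [hp, hr],
        by rw [hp, hw]; norm_num⟩
  -- build the quadruple
  set e : Fin 4 → (Fin m → ℝ) := ![s p, s q, s r, s w] with he
  have hspq : s p ≠ s q := fun h => hpq (hsinj h)
  have hspr : s p ≠ s r := fun h => hpr (hsinj h)
  have hsqr : s q ≠ s r := fun h => hqr (hsinj h)
  have hspw : s p ≠ s w := fun h => hne3 (by rw [h])
  have hsqw : s q ≠ s w := fun h => hne3 (by rw [← h]; exact heq1)
  have hsrw : s r ≠ s w := fun h => hne3 (by rw [← h]; exact heq2)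
  have hmem4 : ∀ j, e j ∈ cube := by
    intro j
    fin_cases j <;> simp only [he, Matrix.cons_val_zero, Matrix.cons_val_one,
      Matrix.head_cons, Matrix.cons_val_two, Matrix.tail_cons, Matrix.cons_val_three] <;>
      exact hscube _
  have hinj4 : Function.Injective e := by
    intro x y hxy
    fin_cases x <;> fin_cases y <;>
      simp only [he, Matrix.cons_val_zero, Matrix.cons_val_one, Matrix.head_cons,
        Matrix.cons_val_two, Matrix.tail_cons, Matrix.cons_val_three] at hxy <;>
      first
        | rfl
        | (exact absurd hxy (by assumption))
        | (exact absurd hxy.symm (by assumption))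
  have hcop4 : Coplanar ℝ (Set.range fun j => π (e j)) := by
    apply htcop.subset
    rintro x ⟨j, rfl⟩
    fin_cases j <;> simp only [he, Matrix.cons_val_zero, Matrix.cons_val_one,
      Matrix.head_cons, Matrix.cons_val_two, Matrix.tail_cons, Matrix.cons_val_three]
    · exact ⟨p, (hπs p).symm⟩
    · exact ⟨q, (hπs q).symm⟩
    · exact ⟨r, (hπs r).symm⟩
    · exact ⟨w, (hπs w).symm⟩
  have hcop5 : Coplanar ℝ (Set.range e) := (hgen e hmem4 hinj4).mp hcop4
  have hrange : Set.range e = ({s p, s q, s r, s w} : Set (Fin m → ℝ)) := by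
    simp only [he, Matrix.range_cons, Matrix.range_empty, Set.singleton_union,
      Set.union_empty]
  rw [hrange] at hcop5
  exact four_not_coplanar (hcube' _ (hscube p)) (hcube' _ (hscube q))
    (hcube' _ (hscube r)) hspq hspr.symm hsqr.symm i heq1 heq2 hne3 hcop5
end
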